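/- The Fano polytope Q_P is terminal: every integer point belonging to the boundary of Q_P is a vertex of Q_P. -/

import Mathlib

open scoped Classical

/-- The poset `P̂ = P ∪ {0̂, 1̂}`: `none` is the minimum `y₀ = 0̂`,
`some none` is the maximum `y_{d+1} = 1̂`, and `some (some i)` is `y_{i+1} ∈ P`. -/
abbrev HatP (d : ℕ) := Option (Option (Fin d))

def hatBot (d : ℕ) : HatP d := none

def hatTop (d : ℕ) : HatP d := some none

/-- The order of `P̂` induced by a partial order `P` on `Fin d`. -/
def hatLE {d : ℕ} (P : PartialOrder (Fin d)) : HatP d → HatP d → Prop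
  | none, _ => True
  | some _, none => False
  | some none, some none => True
  | some none, some (some _) => False
  | some (some _), some none => True
  | some (some a), some (some b) => P.le a b

def hatLT {d : ℕ} (P : PartialOrder (Fin d)) (a b : HatP d) : Prop :=
  hatLE P a b ∧ a ≠ b

/-- `b` covers `a` in `P̂`. -/
def IsCover {d : ℕ} (P : PartialOrder (Fin d)) (a b : HatP d) : Prop :=
  hatLT P a b ∧ ∀ z, ¬ (hatLT P a z ∧ hatLT P z b)

/-- `{a, b}` is an edge of the Hasse diagram of `P̂` (undirected). -/
def IsEdge {d : ℕ} (P : PartialOrder (Fin d)) (a b : HatP d) : Prop :=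
  IsCover P a b ∨ IsCover P b a

/-- `chi y = e_i` if `y = y_i ∈ P`, and `0` if `y ∈ {0̂, 1̂}`. -/
def chi {d : ℕ} : HatP d → (Fin d → ℝ)
  | some (some i) => fun k => if k = i then 1 else 0
  | _ => 0

/-- `ρ(e)` for the edge `e = {a, b}` with `a < b`. -/
def rho {d : ℕ} (a b : HatP d) : Fin d → ℝ := chi a - chi b

/-- `ρ(e)` for an unordered edge `{a, b}`. -/
noncomputable def rhoE {d : ℕ} (P : PartialOrder (Fin d)) (a b : HatP d) : Fin d → ℝ :=
  if hatLT P a b then rho a b else rho b a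

/-- The set `{ρ(e) : e an edge of P̂}`. -/
def edgeVecs {d : ℕ} (P : PartialOrder (Fin d)) : Set (Fin d → ℝ) :=
  {v | ∃ a b, IsCover P a b ∧ v = rho a b}

/-- The polytope `Q_P`, convex hull of `{ρ(e) : e an edge of P̂}`. -/
def QPoly {d : ℕ} (P : PartialOrder (Fin d)) : Set (Fin d → ℝ) :=
  convexHull ℝ (edgeVecs P)

/-- A point of `ℝ^d` all of whose coordinates are integers. -/
def IsIntegralPt {d : ℕ} (x : Fin d → ℝ) : Prop := ∀ k, ∃ z : ℤ, x k = (z : ℝ)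

/-- A facet of a polytope: an exposed face of dimension `d - 1`. -/
def IsFacet {d : ℕ} (Q F : Set (Fin d → ℝ)) : Prop :=
  IsExposed ℝ Q F ∧ Module.finrank ℝ ↥(vectorSpan ℝ F) = d - 1

/-- A cycle `(c 0, c 1, …, c m)` in (the Hasse diagram of) `P̂`;
indices are cyclic in `Fin (m+1)`. -/
def IsCycle {d : ℕ} (P : PartialOrder (Fin d)) {m : ℕ} (c : Fin (m + 1) → HatP d) : Prop :=
  2 ≤ m ∧ Function.Injective c ∧ ∀ j, IsEdge P (c j) (c (j + 1))

/-- A cycle is special if it has as many ascending steps as descending steps. -/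
def CycleSpecial {d : ℕ} (P : PartialOrder (Fin d)) {m : ℕ} (c : Fin (m + 1) → HatP d) : Prop :=
  Nat.card {j : Fin (m + 1) // hatLT P (c j) (c (j + 1))} =
    Nat.card {j : Fin (m + 1) // hatLT P (c (j + 1)) (c j)}

/-- A very special cycle: special, and not containing both `0̂` and `1̂`. -/
def VerySpecialCycle {d : ℕ} (P : PartialOrder (Fin d)) {m : ℕ}
    (c : Fin (m + 1) → HatP d) : Prop :=
  IsCycle P c ∧ CycleSpecial P c ∧
    ¬ (hatBot d ∈ Set.range c ∧ hatTop d ∈ Set.range c)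

/-- A path `(c 0, c 1, …, c m)` in (the Hasse diagram of) `P̂`. -/
def IsPath {d : ℕ} (P : PartialOrder (Fin d)) {m : ℕ} (c : Fin (m + 1) → HatP d) : Prop :=
  Function.Injective c ∧ ∀ j : Fin m, IsEdge P (c j.castSucc) (c j.succ)

/-- A path is special if it has as many ascending steps as descending steps. -/
def PathSpecial {d : ℕ} (P : PartialOrder (Fin d)) {m : ℕ} (c : Fin (m + 1) → HatP d) : Prop :=
  Nat.card {j : Fin m // hatLT P (c j.castSucc) (c j.succ)} =
    Nat.card {j : Fin m // hatLT P (c j.succ) (c j.castSucc)}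

/-- `μ` is the level function of a special cycle `c`. -/
def IsMuCycle {d : ℕ} (P : PartialOrder (Fin d)) {m : ℕ} (c : Fin (m + 1) → HatP d)
    (μ : Fin (m + 1) → ℕ) : Prop :=
  (∀ j, (hatLT P (c j) (c (j + 1)) → μ (j + 1) = μ j + 1) ∧
        (hatLT P (c (j + 1)) (c j) → μ j = μ (j + 1) + 1)) ∧
  ∃ j, μ j = 0

/-- `μ` is the level function of a special path `c`. -/
def IsMuPath {d : ℕ} (P : PartialOrder (Fin d)) {m : ℕ} (c : Fin (m + 1) → HatP d)
    (μ : Fin (m + 1) → ℕ) : Prop :=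
  (∀ j : Fin m, (hatLT P (c j.castSucc) (c j.succ) → μ j.succ = μ j.castSucc + 1) ∧
        (hatLT P (c j.succ) (c j.castSucc) → μ j.castSucc = μ j.succ + 1)) ∧
  ∃ j, μ j = 0

/-- The distance `dist_{P̂}(y, z)`: the smallest `s` for which there is a saturated
chain `y = z_0 < z_1 < ⋯ < z_s = z` in `P̂`. -/
noncomputable def hatDist {d : ℕ} (P : PartialOrder (Fin d)) (y z : HatP d) : ℕ :=
  sInf {s | ∃ c : Fin (s + 1) → HatP d, c 0 = y ∧ c (Fin.last s) = z ∧
    ∀ j : Fin s, IsCover P (c j.castSucc) (c j.succ)}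

/-- `P̂` has a very special cycle satisfying the inequalities (1) and (2). -/
def HasBadCycle {d : ℕ} (P : PartialOrder (Fin d)) : Prop :=
  ∃ (m : ℕ) (c : Fin (m + 1) → HatP d) (μ : Fin (m + 1) → ℕ),
    VerySpecialCycle P c ∧ IsMuCycle P c μ ∧
    (∀ a b, hatLT P (c b) (c a) →
      (μ a : ℤ) - (μ b : ℤ) ≤ (hatDist P (c b) (c a) : ℤ)) ∧
    (∀ a b, (μ a : ℤ) - (μ b : ℤ) ≤
      (hatDist P (hatBot d) (c a) : ℤ) + (hatDist P (c b) (hatTop d) : ℤ))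

/-- `P̂` has a special path from `0̂` to `1̂` satisfying the inequality (3). -/
def HasBadPath {d : ℕ} (P : PartialOrder (Fin d)) : Prop :=
  ∃ (m : ℕ) (c : Fin (m + 1) → HatP d) (μ : Fin (m + 1) → ℕ),
    IsPath P c ∧ PathSpecial P c ∧ c 0 = hatBot d ∧ c (Fin.last m) = hatTop d ∧
    IsMuPath P c μ ∧
    (∀ a b, hatLT P (c b) (c a) →
      (μ a : ℤ) - (μ b : ℤ) ≤ (hatDist P (c b) (c a) : ℤ))

/-- A polytope is simplicial (ℚ-factorial) if each of its proper faces is a simplex. -/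
def SimplicialPoly {d : ℕ} (Q : Set (Fin d → ℝ)) : Prop :=
  ∀ F : Set (Fin d → ℝ), IsExposed ℝ Q F → F ≠ Q →
    AffineIndependent ℝ (fun p : Set.extremePoints ℝ F => (p : Fin d → ℝ))

/-- A polytope is smooth if the vertices of each facet form a ℤ-basis of `ℤ^d`. -/
def SmoothPoly {d : ℕ} (Q : Set (Fin d → ℝ)) : Prop :=
  ∀ F : Set (Fin d → ℝ), IsFacet Q F →
    ∃ b : Module.Basis (Fin d) ℤ (Fin d → ℤ),
      (Set.range fun i => fun k => ((b i k : ℤ) : ℝ)) = Set.extremePoints ℝ F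

/-- A maximal chain `0̂ = c 0 < c 1 < ⋯ < c m = 1̂` of `P̂` (of length `m`). -/
def IsMaxChainHat {d : ℕ} (P : PartialOrder (Fin d)) {m : ℕ} (c : Fin (m + 1) → HatP d) : Prop :=
  c 0 = hatBot d ∧ c (Fin.last m) = hatTop d ∧
    ∀ j : Fin m, IsCover P (c j.castSucc) (c j.succ)

/-- `P` is pure: all maximal chains of `P̂` have the same length. -/
def PureP {d : ℕ} (P : PartialOrder (Fin d)) : Prop :=
  ∀ (m m' : ℕ) (c : Fin (m + 1) → HatP d) (c' : Fin (m' + 1) → HatP d),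
    IsMaxChainHat P c → IsMaxChainHat P c' → m = m'
section Aux

variable {d : ℕ} (P : PartialOrder (Fin d))

lemma hatLE_trans {a b c : HatP d} (h1 : hatLE P a b) (h2 : hatLE P b c) : hatLE P a c := by
  rcases a with _ | (_ | a) <;> rcases b with _ | (_ | b) <;> rcases c with _ | (_ | c) <;>
    simp_all [hatLE]
  exact P.le_trans a b c h1 h2

lemma hatLE_antisymm {a b : HatP d} (h1 : hatLE P a b) (h2 : hatLE P b a) : a = b := by
  rcases a with _ | (_ | a) <;> rcases b with _ | (_ | b) <;> simp_all [hatLE]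
  exact P.le_antisymm a b h1 h2

lemma hatLT_trans {a b c : HatP d} (h1 : hatLT P a b) (h2 : hatLT P b c) : hatLT P a c := by
  refine ⟨hatLE_trans P h1.1 h2.1, fun he => ?_⟩
  subst he
  exact h2.2 (hatLE_antisymm P h2.1 h1.1)

lemma hatLE_top (a : HatP d) : hatLE P a (hatTop d) := by
  rcases a with _ | (_ | a) <;> trivial

lemma hatLE_bot (a : HatP d) : hatLE P (hatBot d) a := trivial

lemma exists_min_rel {α : Type*} (r : α → α → Prop)
    (htr : ∀ {x y z}, r x y → r y z → r x z) (hirr : ∀ x, ¬ r x x)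
    (S : Finset α) : S.Nonempty → ∃ m ∈ S, ∀ x ∈ S, ¬ r x m := by
  classical
  induction S using Finset.strongInduction with
  | _ S ih =>
    intro hS
    obtain ⟨a, ha⟩ := hS
    by_cases h : ∀ x ∈ S, ¬ r x a
    · exact ⟨a, ha, h⟩
    · push_neg at h
      obtain ⟨x, hx, hxa⟩ := h
      have hsub : S.filter (fun y => r y a) ⊂ S :=
        Finset.filter_ssubset.mpr ⟨a, ha, hirr a⟩
      obtain ⟨m, hm, hmin⟩ := ih _ hsub ⟨x, Finset.mem_filter.mpr ⟨hx, hxa⟩⟩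
      refine ⟨m, (Finset.mem_filter.mp hm).1, fun y hy hym => ?_⟩
      exact hmin y (Finset.mem_filter.mpr ⟨hy, htr hym (Finset.mem_filter.mp hm).2⟩) hym

lemma exists_cover_up (a : HatP d) (ha : a ≠ hatTop d) : ∃ m, IsCover P a m := by
  classical
  have hne : (Finset.univ.filter (fun z => hatLT P a z)).Nonempty :=
    ⟨hatTop d, Finset.mem_filter.mpr ⟨Finset.mem_univ _, hatLE_top P a, ha⟩⟩
  obtain ⟨m, hm, hmin⟩ := exists_min_rel (hatLT P)
    (fun h1 h2 => hatLT_trans P h1 h2) (fun x h => h.2 rfl) _ hne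
  exact ⟨m, (Finset.mem_filter.mp hm).2, fun z hz =>
    hmin z (Finset.mem_filter.mpr ⟨Finset.mem_univ _, hz.1⟩) hz.2⟩

lemma exists_cover_down (a : HatP d) (ha : a ≠ hatBot d) : ∃ m, IsCover P m a := by
  classical
  have hne : (Finset.univ.filter (fun z => hatLT P z a)).Nonempty :=
    ⟨hatBot d, Finset.mem_filter.mpr ⟨Finset.mem_univ _, hatLE_bot P a, fun h => ha h.symm⟩⟩
  obtain ⟨m, hm, hmin⟩ := exists_min_rel (fun x y => hatLT P y x)
    (fun h1 h2 => hatLT_trans P h2 h1) (fun x h => h.2 rfl) _ hne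
  exact ⟨m, (Finset.mem_filter.mp hm).2, fun z hz =>
    hmin z (Finset.mem_filter.mpr ⟨Finset.mem_univ _, hz.2⟩) hz.1⟩

lemma chi_top_eq : chi (hatTop d) = 0 := rfl
lemma chi_bot_eq : chi (hatBot d) = 0 := rfl

lemma chi_apply_mem (a : HatP d) (k : Fin d) : chi a k = 0 ∨ chi a k = 1 := by
  rcases a with _ | (_ | p)
  · left; rfl
  · left; rfl
  · by_cases h : k = p
    · right; simp [chi, h]
    · left; simp [chi, h]

lemma chi_nonneg (a : HatP d) (k : Fin d) : 0 ≤ chi a k := by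
  rcases chi_apply_mem a k with h | h <;> rw [h] <;> norm_num

lemma chi_le_one (a : HatP d) (k : Fin d) : chi a k ≤ 1 := by
  rcases chi_apply_mem a k with h | h <;> rw [h] <;> norm_num

lemma chi_pair (a : HatP d) {i k : Fin d} (h : i ≠ k) : chi a i + chi a k ≤ 1 := by
  rcases a with _ | (_ | p)
  · simp [chi]
  · simp [chi]
  · by_cases hi : i = p <;> by_cases hk : k = p
    · exact absurd (hi.trans hk.symm) h
    · simp [chi, hi, hk]
    · simp [chi, hi, hk]
    · simp [chi, hi, hk]

lemma qpoly_coord_le {x : Fin d → ℝ} (hx : x ∈ QPoly P) (k : Fin d) : x k ≤ 1 := by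
  have hsub : QPoly P ⊆ {y : Fin d → ℝ | y k ≤ 1} := by
    apply convexHull_min
    · rintro v ⟨a, b, _, rfl⟩
      show chi a k - chi b k ≤ 1
      have := chi_le_one a k
      have := chi_nonneg b k
      linarith
    · exact convex_halfSpace_le ⟨fun _ _ => rfl, fun _ _ => rfl⟩ 1
  exact hsub hx

lemma qpoly_coord_ge {x : Fin d → ℝ} (hx : x ∈ QPoly P) (k : Fin d) : -1 ≤ x k := by
  have hsub : QPoly P ⊆ {y : Fin d → ℝ | -1 ≤ y k} := by
    apply convexHull_min
    · rintro v ⟨a, b, _, rfl⟩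
      show -1 ≤ chi a k - chi b k
      have := chi_nonneg a k
      have := chi_le_one b k
      linarith
    · exact convex_halfSpace_ge ⟨fun _ _ => rfl, fun _ _ => rfl⟩ (-1)
  exact hsub hx

lemma pair_isLinear (i k : Fin d) : IsLinearMap ℝ (fun y : Fin d → ℝ => y i + y k) := by
  constructor
  · intro x y; show x i + y i + (x k + y k) = x i + x k + (y i + y k); ring
  · intro c x; show c * x i + c * x k = c * (x i + x k); ring

lemma qpoly_pair_le {x : Fin d → ℝ} (hx : x ∈ QPoly P) {i k : Fin d} (h : i ≠ k) :
    x i + x k ≤ 1 := by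
  have hsub : QPoly P ⊆ {y : Fin d → ℝ | y i + y k ≤ 1} := by
    apply convexHull_min
    · rintro v ⟨a, b, _, rfl⟩
      show chi a i - chi b i + (chi a k - chi b k) ≤ 1
      have := chi_pair a h
      have := chi_nonneg b i
      have := chi_nonneg b k
      linarith
    · exact convex_halfSpace_le (pair_isLinear i k) 1
  exact hsub hx

lemma qpoly_pair_ge {x : Fin d → ℝ} (hx : x ∈ QPoly P) {i k : Fin d} (h : i ≠ k) :
    -1 ≤ x i + x k := by
  have hsub : QPoly P ⊆ {y : Fin d → ℝ | -1 ≤ y i + y k} := by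
    apply convexHull_min
    · rintro v ⟨a, b, _, rfl⟩
      show -1 ≤ chi a i - chi b i + (chi a k - chi b k)
      have := chi_pair b h
      have := chi_nonneg a i
      have := chi_nonneg a k
      linarith
    · exact convex_halfSpace_ge (pair_isLinear i k) (-1)
  exact hsub hx

lemma chi_mem_up : ∀ (N : ℕ) (a : HatP d),
    (Finset.univ.filter fun z => hatLT P a z).card ≤ N → a ≠ hatTop d →
    ∃ n : ℕ, 0 < n ∧ ((n : ℝ))⁻¹ • chi a ∈ QPoly P := by
  classical
  intro N
  induction N with
  | zero =>
    intro a hcard ha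
    have hmem : hatTop d ∈ Finset.univ.filter (fun z => hatLT P a z) :=
      Finset.mem_filter.mpr ⟨Finset.mem_univ _, hatLE_top P a, ha⟩
    have := Finset.card_pos.mpr ⟨_, hmem⟩
    omega
  | succ N ih =>
    intro a hcard ha
    obtain ⟨m, hm⟩ := exists_cover_up P a ha
    have hedge : rho a m ∈ QPoly P := subset_convexHull ℝ _ ⟨a, m, hm, rfl⟩
    by_cases htop : m = hatTop d
    · refine ⟨1, one_pos, ?_⟩
      have hra : rho a m = chi a := by
        rw [htop, rho, chi_top_eq, sub_zero]
      simpa [hra] using hedge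
    · have hss : (Finset.univ.filter fun z => hatLT P m z) ⊂
          (Finset.univ.filter fun z => hatLT P a z) := by
        constructor
        · intro z hz
          exact Finset.mem_filter.mpr
            ⟨Finset.mem_univ _, hatLT_trans P hm.1 (Finset.mem_filter.mp hz).2⟩
        · intro hsub
          have hmem : m ∈ Finset.univ.filter (fun z => hatLT P a z) :=
            Finset.mem_filter.mpr ⟨Finset.mem_univ _, hm.1⟩
          exact (Finset.mem_filter.mp (hsub hmem)).2.2 rfl
      obtain ⟨n, hn, hmm⟩ := ih m (by have := Finset.card_lt_card hss; omega) htop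
      refine ⟨n + 1, Nat.succ_pos _, ?_⟩
      have hn0 : (n : ℝ) ≠ 0 := Nat.cast_ne_zero.mpr hn.ne'
      have hnpos : (0:ℝ) < (n:ℝ) := by positivity
      have hcomb := (convex_convexHull ℝ (edgeVecs P)) hedge hmm
        (a := ((n:ℝ)+1)⁻¹) (b := (n:ℝ) * ((n:ℝ)+1)⁻¹)
        (by positivity) (by positivity) (by field_simp; ring)
      have hkey : ((n:ℝ)+1)⁻¹ • rho a m + ((n:ℝ) * ((n:ℝ)+1)⁻¹) • ((n:ℝ)⁻¹ • chi m)
          = ((n:ℝ)+1)⁻¹ • chi a := by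
        rw [rho, smul_smul]
        have hc : (n:ℝ) * ((n:ℝ)+1)⁻¹ * ((n:ℝ))⁻¹ = ((n:ℝ)+1)⁻¹ := by
          field_simp
        rw [hc, smul_sub]
        abel
      rw [hkey] at hcomb
      have hcast : ((n + 1 : ℕ) : ℝ) = (n:ℝ) + 1 := by push_cast; ring
      rw [hcast]
      exact hcomb

lemma chi_mem_down : ∀ (N : ℕ) (a : HatP d),
    (Finset.univ.filter fun z => hatLT P z a).card ≤ N → a ≠ hatBot d →
    ∃ n : ℕ, 0 < n ∧ ((n : ℝ))⁻¹ • (-chi a) ∈ QPoly P := by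
  classical
  intro N
  induction N with
  | zero =>
    intro a hcard ha
    have hmem : hatBot d ∈ Finset.univ.filter (fun z => hatLT P z a) :=
      Finset.mem_filter.mpr ⟨Finset.mem_univ _, hatLE_bot P a, fun h => ha h.symm⟩
    have := Finset.card_pos.mpr ⟨_, hmem⟩
    omega
  | succ N ih =>
    intro a hcard ha
    obtain ⟨m, hm⟩ := exists_cover_down P a ha
    have hedge : rho m a ∈ QPoly P := subset_convexHull ℝ _ ⟨m, a, hm, rfl⟩
    by_cases hbot : m = hatBot d
    · refine ⟨1, one_pos, ?_⟩
      have hra : rho m a = -chi a := by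
        rw [hbot, rho, chi_bot_eq, zero_sub]
      simpa [hra] using hedge
    · have hss : (Finset.univ.filter fun z => hatLT P z m) ⊂
          (Finset.univ.filter fun z => hatLT P z a) := by
        constructor
        · intro z hz
          exact Finset.mem_filter.mpr
            ⟨Finset.mem_univ _, hatLT_trans P (Finset.mem_filter.mp hz).2 hm.1⟩
        · intro hsub
          have hmem : m ∈ Finset.univ.filter (fun z => hatLT P z a) :=
            Finset.mem_filter.mpr ⟨Finset.mem_univ _, hm.1⟩
          exact (Finset.mem_filter.mp (hsub hmem)).2.2 rfl
      obtain ⟨n, hn, hmm⟩ := ih m (by have := Finset.card_lt_card hss; omega) hbot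
      refine ⟨n + 1, Nat.succ_pos _, ?_⟩
      have hn0 : (n : ℝ) ≠ 0 := Nat.cast_ne_zero.mpr hn.ne'
      have hnpos : (0:ℝ) < (n:ℝ) := by positivity
      have hcomb := (convex_convexHull ℝ (edgeVecs P)) hedge hmm
        (a := ((n:ℝ)+1)⁻¹) (b := (n:ℝ) * ((n:ℝ)+1)⁻¹)
        (by positivity) (by positivity) (by field_simp; ring)
      have hkey : ((n:ℝ)+1)⁻¹ • rho m a + ((n:ℝ) * ((n:ℝ)+1)⁻¹) • ((n:ℝ)⁻¹ • (-chi m))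
          = ((n:ℝ)+1)⁻¹ • (-chi a) := by
        rw [rho, smul_smul]
        have hc : (n:ℝ) * ((n:ℝ)+1)⁻¹ * ((n:ℝ))⁻¹ = ((n:ℝ)+1)⁻¹ := by
          field_simp
        rw [hc, smul_sub, smul_neg, smul_neg]
        abel
      rw [hkey] at hcomb
      have hcast : ((n + 1 : ℕ) : ℝ) = (n:ℝ) + 1 := by push_cast; ring
      rw [hcast]
      exact hcomb

lemma zero_mem_interior (hd : 1 ≤ d) : (0 : Fin d → ℝ) ∈ interior (QPoly P) := by
  classical
  have hconv := convex_convexHull ℝ (edgeVecs P)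
  have hup : ∀ k : Fin d, ∃ n : ℕ, 0 < n ∧ (n:ℝ)⁻¹ • chi (some (some k)) ∈ QPoly P :=
    fun k => chi_mem_up P _ (some (some k)) le_rfl (by simp [hatTop])
  have hdn : ∀ k : Fin d, ∃ n : ℕ, 0 < n ∧ (n:ℝ)⁻¹ • (-chi (some (some k))) ∈ QPoly P :=
    fun k => chi_mem_down P _ (some (some k)) le_rfl (by simp [hatBot])
  choose np hnp hupm using hup
  choose nm hnm hdnm using hdn
  set k0 : Fin d := ⟨0, hd⟩ with hk0
  -- 0 ∈ QPoly P
  have h0 : (0 : Fin d → ℝ) ∈ QPoly P := by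
    have ha0 : ((np k0 : ℝ)) ≠ 0 := Nat.cast_ne_zero.mpr (hnp k0).ne'
    have hb0 : ((nm k0 : ℝ)) ≠ 0 := Nat.cast_ne_zero.mpr (hnm k0).ne'
    have hapos : (0:ℝ) < np k0 := by positivity
    have hbpos : (0:ℝ) < nm k0 := by positivity
    have habpos : (0:ℝ) < (np k0 : ℝ) + nm k0 := by positivity
    have hc := hconv (hupm k0) (hdnm k0)
      (a := (np k0 : ℝ)/((np k0 : ℝ) + nm k0)) (b := (nm k0 : ℝ)/((np k0 : ℝ) + nm k0))
      (by positivity) (by positivity) (by field_simp)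
    have hkey : ((np k0 : ℝ)/((np k0 : ℝ) + nm k0)) • ((np k0 : ℝ)⁻¹ • chi (some (some k0)))
        + ((nm k0 : ℝ)/((np k0 : ℝ) + nm k0)) • ((nm k0 : ℝ)⁻¹ • (-chi (some (some k0))))
        = (0 : Fin d → ℝ) := by
      rw [smul_smul, smul_smul, smul_neg, ← sub_eq_add_neg, ← sub_smul]
      have hz : (np k0 : ℝ)/((np k0 : ℝ) + nm k0) * (np k0 : ℝ)⁻¹
          - (nm k0 : ℝ)/((np k0 : ℝ) + nm k0) * (nm k0 : ℝ)⁻¹ = 0 := by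
        field_simp
        ring
      rw [hz, zero_smul]
    rwa [hkey] at hc
  -- uniform scale
  set M : ℕ := Finset.univ.sup (fun k => max (np k) (nm k)) with hM
  have hMk : ∀ k : Fin d, np k ≤ M ∧ nm k ≤ M := by
    intro k
    have h := Finset.le_sup (f := fun k => max (np k) (nm k)) (Finset.mem_univ k)
    exact ⟨le_trans (le_max_left _ _) h, le_trans (le_max_right _ _) h⟩
  have hMpos : 0 < M := lt_of_lt_of_le (hnp k0) (hMk k0).1
  have hM0 : ((M:ℝ)) ≠ 0 := Nat.cast_ne_zero.mpr hMpos.ne'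
  have hMrpos : (0:ℝ) < M := by positivity
  have hscale : ∀ (c : ℝ) (w : Fin d → ℝ), c • w ∈ QPoly P →
      ∀ e : ℝ, 0 ≤ e → e ≤ 1 → (e * c) • w ∈ QPoly P := by
    intro c w hw e he he1
    have := hconv hw h0 (a := e) (b := 1 - e) he (by linarith) (by ring)
    simpa [smul_smul, QPoly] using this
  have hMu : ∀ k : Fin d, (M:ℝ)⁻¹ • chi (some (some k)) ∈ QPoly P := by
    intro k
    have hk0' : ((np k : ℝ)) ≠ 0 := Nat.cast_ne_zero.mpr (hnp k).ne'
    have h := hscale _ _ (hupm k) ((np k : ℝ)/(M:ℝ)) (by positivity)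
      (by rw [div_le_one hMrpos]; exact_mod_cast (hMk k).1)
    have he : ((np k : ℝ)/(M:ℝ)) * (np k : ℝ)⁻¹ = (M:ℝ)⁻¹ := by field_simp
    rwa [he] at h
  have hMd : ∀ k : Fin d, (M:ℝ)⁻¹ • (-chi (some (some k))) ∈ QPoly P := by
    intro k
    have hk0' : ((nm k : ℝ)) ≠ 0 := Nat.cast_ne_zero.mpr (hnm k).ne'
    have h := hscale _ _ (hdnm k) ((nm k : ℝ)/(M:ℝ)) (by positivity)
      (by rw [div_le_one hMrpos]; exact_mod_cast (hMk k).2)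
    have he : ((nm k : ℝ)/(M:ℝ)) * (nm k : ℝ)⁻¹ = (M:ℝ)⁻¹ := by field_simp
    rwa [he] at h
  have hεpos : (0:ℝ) < (M:ℝ)⁻¹ := by positivity
  -- l1 absorption
  have habs : ∀ x : Fin d → ℝ, (∑ k, |x k|) ≤ (M:ℝ)⁻¹ → x ∈ QPoly P := by
    intro x hx
    set ε : ℝ := (M:ℝ)⁻¹ with hε
    set f : Option (Fin d) → ℝ :=
      fun o => Option.elim o (1 - (∑ k, |x k|)/ε) (fun k => |x k|/ε) with hf
    set g : Option (Fin d) → (Fin d → ℝ) :=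
      fun o => Option.elim o 0
        (fun k => if 0 ≤ x k then ε • chi (some (some k)) else ε • (-chi (some (some k)))) with hg
    have hsum : ∑ k, |x k| / ε = (∑ k, |x k|)/ε := by rw [Finset.sum_div]
    have h1 : ∀ i ∈ (Finset.univ : Finset (Option (Fin d))), 0 ≤ f i := by
      rintro (_ | k) _
      · show 0 ≤ 1 - (∑ k, |x k|)/ε
        have : (∑ k, |x k|)/ε ≤ 1 := by
          rw [div_le_one hεpos]; exact hx
        linarith
      · show 0 ≤ |x k|/ε
        positivity
    have h2 : ∑ i, f i = 1 := by
      rw [Fintype.sum_option]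
      show (1 - (∑ k, |x k|)/ε) + ∑ k, |x k|/ε = 1
      rw [hsum]; ring
    have h3 : ∀ i ∈ (Finset.univ : Finset (Option (Fin d))), g i ∈ QPoly P := by
      rintro (_ | k) _
      · exact h0
      · show (if 0 ≤ x k then ε • chi (some (some k)) else ε • (-chi (some (some k)))) ∈ QPoly P
        split_ifs
        · exact hMu k
        · exact hMd k
    have h4 := hconv.sum_mem h1 h2 h3
    have hterm : ∀ k : Fin d, f (some k) • g (some k) = x k • chi (some (some k)) := by
      intro k
      show (|x k|/ε) • (if 0 ≤ x k then ε • chi (some (some k))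
        else ε • (-chi (some (some k)))) = x k • chi (some (some k))
      by_cases h : 0 ≤ x k
      · rw [if_pos h, smul_smul]
        congr 1
        rw [abs_of_nonneg h]
        field_simp
      · rw [if_neg h, smul_neg, smul_neg, smul_smul, ← neg_smul]
        congr 1
        rw [abs_of_neg (lt_of_not_ge h)]
        field_simp
    have hxeq : ∑ i, f i • g i = x := by
      rw [Fintype.sum_option]
      have hnone : f none • g none = 0 := by
        show _ • (0 : Fin d → ℝ) = 0
        rw [smul_zero]
      rw [hnone, zero_add]
      have : (∑ k, f (some k) • g (some k)) = ∑ k, x k • chi (some (some k)) := by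
        exact Finset.sum_congr rfl (fun k _ => hterm k)
      rw [this]
      funext j
      rw [Finset.sum_apply]
      have hco : ∀ k : Fin d, (x k • chi (some (some k))) j = if j = k then x k else 0 := by
        intro k
        show x k * (if j = k then 1 else 0) = _
        split_ifs <;> ring
      rw [Finset.sum_congr rfl (fun k _ => hco k)]
      simp
    rw [hxeq] at h4
    exact h4
  -- ball
  have hdpos : (0:ℝ) < d := by exact_mod_cast hd
  have hr : (0:ℝ) < (M:ℝ)⁻¹ / d := by positivity
  have hball : Metric.ball (0 : Fin d → ℝ) ((M:ℝ)⁻¹ / d) ⊆ QPoly P := by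
    intro x hx
    apply habs
    have hxn : dist x 0 < (M:ℝ)⁻¹/d := Metric.mem_ball.mp hx
    rw [dist_zero_right] at hxn
    have hcomp : ∀ k, |x k| ≤ ‖x‖ := fun k => by
      simpa [Real.norm_eq_abs] using norm_le_pi_norm x k
    calc ∑ k, |x k| ≤ ∑ _k : Fin d, ‖x‖ := Finset.sum_le_sum (fun k _ => hcomp k)
      _ = d * ‖x‖ := by
          rw [Finset.sum_const, Finset.card_univ, Fintype.card_fin, nsmul_eq_mul]
      _ ≤ (M:ℝ)⁻¹ := by
          have h1 : (d:ℝ) * ‖x‖ ≤ (d:ℝ) * ((M:ℝ)⁻¹/d) :=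
            mul_le_mul_of_nonneg_left hxn.le hdpos.le
          have h2 : (d:ℝ) * ((M:ℝ)⁻¹/d) = (M:ℝ)⁻¹ := by field_simp
          linarith
  exact interior_maximal hball Metric.isOpen_ball (Metric.mem_ball_self hr)

lemma squeeze {a b u v w : ℝ} (ha : 0 < a) (hb : 0 < b) (hab : a + b = 1)
    (hu : u ≤ w) (hv : v ≤ w) (he : a * u + b * v = w) : u = w ∧ v = w := by
  have hw : a * w + b * w = w := by rw [← add_mul, hab, one_mul]
  constructor
  · by_contra h
    have hu' : u < w := lt_of_le_of_ne hu h
    have h1 : a * u < a * w := (mul_lt_mul_iff_right₀ ha).mpr hu'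
    have h2 : b * v ≤ b * w := mul_le_mul_of_nonneg_left hv hb.le
    linarith
  · by_contra h
    have hv' : v < w := lt_of_le_of_ne hv h
    have h1 : b * v < b * w := (mul_lt_mul_iff_right₀ hb).mpr hv'
    have h2 : a * u ≤ a * w := mul_le_mul_of_nonneg_left hu ha.le
    linarith

lemma squeeze_ge {a b u v w : ℝ} (ha : 0 < a) (hb : 0 < b) (hab : a + b = 1)
    (hu : w ≤ u) (hv : w ≤ v) (he : a * u + b * v = w) : u = w ∧ v = w := by
  have h := squeeze ha hb hab (neg_le_neg hu) (neg_le_neg hv)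
    (by rw [mul_neg, mul_neg, ← neg_add, he])
  exact ⟨by linarith [h.1], by linarith [h.2]⟩

end Aux

/-- `Q_P` is terminal: every integer point belonging to the boundary
of `Q_P` is a vertex of `Q_P`. -/
theorem stmt4 (d : ℕ) (hd : 1 ≤ d) (P : PartialOrder (Fin d)) :
    ∀ x ∈ frontier (QPoly P), IsIntegralPt x → x ∈ Set.extremePoints ℝ (QPoly P) := by
  intro x hx hint
  have hfin : (edgeVecs P).Finite := by
    have hsub : edgeVecs P ⊆ Set.range (fun p : HatP d × HatP d => rho p.1 p.2) := by
      rintro v ⟨a, b, _, rfl⟩; exact ⟨(a, b), rfl⟩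
    exact (Set.finite_range _).subset hsub
  have hclosed : IsClosed (QPoly P) := (hfin.isCompact_convexHull ℝ).isClosed
  have hxQ : x ∈ QPoly P := by
    have h1 := frontier_subset_closure (s := QPoly P) hx
    rwa [hclosed.closure_eq] at h1
  have h0i := zero_mem_interior P hd
  have hxni : x ∉ interior (QPoly P) := hx.2
  have hx0 : x ≠ 0 := fun h => hxni (h ▸ h0i)
  have hcoord : ∀ k, x k = -1 ∨ x k = 0 ∨ x k = 1 := by
    intro k
    obtain ⟨z, hz⟩ := hint k
    have h1 := qpoly_coord_le P hxQ k
    have h2 := qpoly_coord_ge P hxQ k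
    rw [hz] at h1 h2 ⊢
    have hz1 : z ≤ 1 := by exact_mod_cast h1
    have hz2 : (-1:ℤ) ≤ z := by exact_mod_cast h2
    have hz3 : z = -1 ∨ z = 0 ∨ z = 1 := by omega
    rcases hz3 with h | h | h <;> rw [h] <;> norm_num
  refine ⟨hxQ, ?_⟩
  intro y hy z hz hseg
  obtain ⟨a, b, ha, hb, hab, hxe⟩ := hseg
  have happ : ∀ k, a * y k + b * z k = x k := by
    intro k
    have := congrFun hxe k
    simpa [Pi.add_apply, Pi.smul_apply, smul_eq_mul] using this
  by_cases hpos : ∃ i, x i = 1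
  · obtain ⟨i, hi⟩ := hpos
    have hyi : y i = 1 ∧ z i = 1 :=
      squeeze ha hb hab (qpoly_coord_le P hy i) (qpoly_coord_le P hz i)
        (by rw [happ i, hi])
    by_cases hneg : ∃ j, x j = -1
    · obtain ⟨j, hj⟩ := hneg
      have hij : i ≠ j := by
        intro h
        rw [h, hj] at hi
        norm_num at hi
      have hyj : y j = -1 ∧ z j = -1 :=
        squeeze_ge ha hb hab (qpoly_coord_ge P hy j) (qpoly_coord_ge P hz j)
          (by rw [happ j, hj])
      have key : ∀ w, w ∈ QPoly P → w i = 1 → w j = -1 →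
          ∀ k, w k = if k = i then 1 else if k = j then (-1:ℝ) else 0 := by
        intro w hw hwi hwj k
        by_cases hk1 : k = i
        · rw [if_pos hk1, hk1, hwi]
        · rw [if_neg hk1]
          by_cases hk2 : k = j
          · rw [if_pos hk2, hk2, hwj]
          · rw [if_neg hk2]
            have h1 := qpoly_pair_le P hw (show i ≠ k from fun h => hk1 h.symm)
            have h2 := qpoly_pair_ge P hw (show j ≠ k from fun h => hk2 h.symm)
            rw [hwi] at h1
            rw [hwj] at h2
            linarith
      refine And.left (b := z = x) ⟨?_, ?_⟩
      · funext k
        rw [key y hy hyi.1 hyj.1 k, ← key x hxQ hi hj k]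
      · funext k
        rw [key z hz hyi.2 hyj.2 k, ← key x hxQ hi hj k]
    · push_neg at hneg
      have hxk : ∀ k, k ≠ i → x k = 0 := by
        intro k hk
        rcases hcoord k with h | h | h
        · exact absurd h (hneg k)
        · exact h
        · have hp := qpoly_pair_le P hxQ (show i ≠ k from fun h' => hk h'.symm)
          rw [hi, h] at hp
          norm_num at hp
      have hkey : ∀ w, w ∈ QPoly P → w i = 1 → ∀ k, k ≠ i → w k ≤ 0 := by
        intro w hw hwi k hk
        have h1 := qpoly_pair_le P hw (show i ≠ k from fun h' => hk h'.symm)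
        rw [hwi] at h1
        linarith
      have hcs : ∀ k, k ≠ i → y k = 0 ∧ z k = 0 := by
        intro k hk
        exact squeeze ha hb hab (hkey y hy hyi.1 k hk) (hkey z hz hyi.2 k hk)
          (by rw [happ k, hxk k hk])
      refine And.left (b := z = x) ⟨?_, ?_⟩
      · funext k
        by_cases hk : k = i
        · rw [hk, hyi.1, hi]
        · rw [(hcs k hk).1, hxk k hk]
      · funext k
        by_cases hk : k = i
        · rw [hk, hyi.2, hi]
        · rw [(hcs k hk).2, hxk k hk]
  · push_neg at hpos
    by_cases hneg : ∃ j, x j = -1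
    · obtain ⟨j, hj⟩ := hneg
      have hyj : y j = -1 ∧ z j = -1 :=
        squeeze_ge ha hb hab (qpoly_coord_ge P hy j) (qpoly_coord_ge P hz j)
          (by rw [happ j, hj])
      have hxk : ∀ k, k ≠ j → x k = 0 := by
        intro k hk
        rcases hcoord k with h | h | h
        · have hp := qpoly_pair_ge P hxQ (show j ≠ k from fun h' => hk h'.symm)
          rw [hj, h] at hp
          norm_num at hp
        · exact h
        · exact absurd h (hpos k)
      have hkey : ∀ w, w ∈ QPoly P → w j = -1 → ∀ k, k ≠ j → 0 ≤ w k := by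
        intro w hw hwj k hk
        have h1 := qpoly_pair_ge P hw (show j ≠ k from fun h' => hk h'.symm)
        rw [hwj] at h1
        linarith
      have hcs : ∀ k, k ≠ j → y k = 0 ∧ z k = 0 := by
        intro k hk
        exact squeeze_ge ha hb hab (hkey y hy hyj.1 k hk) (hkey z hz hyj.2 k hk)
          (by rw [happ k, hxk k hk])
      refine And.left (b := z = x) ⟨?_, ?_⟩
      · funext k
        by_cases hk : k = j
        · rw [hk, hyj.1, hj]
        · rw [(hcs k hk).1, hxk k hk]
      · funext k
        by_cases hk : k = j
        · rw [hk, hyj.2, hj]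
        · rw [(hcs k hk).2, hxk k hk]
    · push_neg at hneg
      exfalso
      apply hx0
      funext k
      rcases hcoord k with h | h | h
      · exact absurd h (hneg k)
      · exact h
      · exact absurd h (hpos k)
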